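/- Let η : ℤ → ℤ be a bijection and define R(x) := |{i ≤ x : η(i) ≤ η(x)}| (assumed finite for all x). Fix a ∈ ℤ with η(a) > η(a+1), and let η' be obtained by swapping the values of η at a and a+1. Let R' be defined from η' analogously. Then R(a) ≥ R(a+1), R'(a) = R(a+1), R'(a+1) = R(a) + 1, and R'(y) = R(y) for all y ∉ {a, a+1}. Conversely, if η(a) < η(a+1) then R(a) < R(a+1). -/

import Mathlib

/-!
Write `N_f(x, c)` for the number of sites `i ≤ x` with `f i ≤ c`, so that `R x = N_η(x, η x)`.
The swapped configuration is `η' = η ∘ σ` with `σ` the transposition of `a` and `a + 1`; for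
`x ≠ a` the cut `i ≤ x` is `σ`-invariant, hence `N_{η'}(x, c) = N_η(x, c)`. Moving the cut
across one site adds one to `N` exactly when that site's value is at most `c`, and `N` is
monotone in `c`. This gives the identities for `R'`; the inequality `R (a + 1) ≤ R a` is read
off after the swap, where the set counted by `R' (a + 1)` contains the one counted by `R' a`
together with the site `a + 1`.
-/

namespace TASEP

open Set

variable {β : Type*} [Preorder β]

def rankSet (f : ℤ → β) (x : ℤ) (c : β) : Set ℤ := {i | i ≤ x ∧ f i ≤ c}

variable {f : ℤ → β} {x a : ℤ} {c : β}

theorem rankSet_succ_of_le (h : f (x + 1) ≤ c) :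
    rankSet f (x + 1) c = insert (x + 1) (rankSet f x c) := by
  ext i
  simp only [rankSet, mem_ofPred_eq, mem_insert_iff]
  constructor
  · rintro ⟨hi, hfi⟩
    rcases hi.lt_or_eq with hi | rfl
    · exact .inr ⟨by omega, hfi⟩
    · exact .inl rfl
  · rintro (rfl | ⟨hi, hfi⟩)
    · exact ⟨le_rfl, h⟩
    · exact ⟨by omega, hfi⟩

theorem rankSet_succ_of_not_le (h : ¬f (x + 1) ≤ c) :
    rankSet f (x + 1) c = rankSet f x c := by
  ext i
  simp only [rankSet, mem_ofPred_eq]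
  constructor
  · rintro ⟨hi, hfi⟩
    rcases hi.lt_or_eq with hi | rfl
    · exact ⟨by omega, hfi⟩
    · exact absurd hfi h
  · rintro ⟨hi, hfi⟩
    exact ⟨by omega, hfi⟩

theorem ncard_rankSet_succ_of_le (hfin : (rankSet f x c).Finite) (h : f (x + 1) ≤ c) :
    (rankSet f (x + 1) c).ncard = (rankSet f x c).ncard + 1 := by
  rw [rankSet_succ_of_le h, ncard_insert_of_notMem (fun hx => by simp [rankSet] at hx) hfin]

theorem rankSet_mono {y : ℤ} {d : β} (hxy : x ≤ y) (hcd : c ≤ d) :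
    rankSet f x c ⊆ rankSet f y d :=
  fun _ ⟨hi, hfi⟩ => ⟨hi.trans hxy, hfi.trans hcd⟩

theorem rankSet_comp_swap (hx : x ≠ a) :
    rankSet (f ∘ Equiv.swap a (a + 1)) x c = Equiv.swap a (a + 1) ⁻¹' rankSet f x c := by
  have hcut : ∀ i, Equiv.swap a (a + 1) i ≤ x ↔ i ≤ x := by
    intro i
    rw [Equiv.swap_apply_def]
    split_ifs <;> omega
  ext i
  simp only [rankSet, mem_ofPred_eq, mem_preimage, Function.comp_apply, hcut]

theorem ncard_rankSet_comp_swap (hx : x ≠ a) :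
    (rankSet (f ∘ Equiv.swap a (a + 1)) x c).ncard = (rankSet f x c).ncard := by
  rw [rankSet_comp_swap hx]
  exact ncard_preimage_of_injective_subset_range (Equiv.injective _)
    (by simp [(Equiv.surjective _).range_eq])

theorem ncard_rankSet_comp_swap_left (h : f (a + 1) < f a) :
    (rankSet (f ∘ Equiv.swap a (a + 1)) a (f (a + 1))).ncard =
      (rankSet f (a + 1) (f (a + 1))).ncard := by
  have hskip : ¬(f ∘ Equiv.swap a (a + 1)) (a + 1) ≤ f (a + 1) := by
    simpa using h.not_ge
  rw [← rankSet_succ_of_not_le hskip, ncard_rankSet_comp_swap (by omega)]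

theorem ncard_rankSet_comp_swap_right (hfin : (rankSet f a (f a)).Finite) (h : f (a + 1) ≤ f a) :
    (rankSet (f ∘ Equiv.swap a (a + 1)) (a + 1) (f a)).ncard = (rankSet f a (f a)).ncard + 1 := by
  rw [ncard_rankSet_comp_swap (by omega), ncard_rankSet_succ_of_le hfin h]

theorem ncard_rankSet_succ_le (hfin : (rankSet f a (f a)).Finite) (h : f (a + 1) < f a) :
    (rankSet f (a + 1) (f (a + 1))).ncard ≤ (rankSet f a (f a)).ncard := by
  set σ := Equiv.swap a (a + 1)
  have hfin' : (rankSet (f ∘ σ) a (f a)).Finite := by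
    have hfin_succ : (rankSet (f ∘ σ) (a + 1) (f a)).Finite := by
      rw [rankSet_comp_swap (by omega), rankSet_succ_of_le h.le]
      exact (hfin.insert _).preimage σ.injective.injOn
    exact hfin_succ.subset (rankSet_mono (by omega) le_rfl)
  have hafter : (rankSet (f ∘ σ) a (f (a + 1))).ncard + 1 ≤
      (rankSet (f ∘ σ) (a + 1) (f a)).ncard := by
    rw [ncard_rankSet_succ_of_le hfin' (by simp [σ])]
    exact Nat.succ_le_succ (ncard_le_ncard (rankSet_mono le_rfl h.le) hfin')
  rw [ncard_rankSet_comp_swap_left h, ncard_rankSet_comp_swap_right hfin h.le] at hafter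
  omega

theorem ncard_rankSet_lt_succ (hfin : (rankSet f (a + 1) (f (a + 1))).Finite)
    (h : f a ≤ f (a + 1)) :
    (rankSet f a (f a)).ncard < (rankSet f (a + 1) (f (a + 1))).ncard := by
  have hfin' : (rankSet f a (f (a + 1))).Finite := hfin.subset (rankSet_mono (by omega) le_rfl)
  calc (rankSet f a (f a)).ncard ≤ (rankSet f a (f (a + 1))).ncard :=
        ncard_le_ncard (rankSet_mono le_rfl h) hfin'
    _ < (rankSet f (a + 1) (f (a + 1))).ncard := by
        rw [ncard_rankSet_succ_of_le hfin' le_rfl]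
        exact Nat.lt_succ_self _

end TASEP

theorem Function.eq_comp_swap_of_apply {α β : Type*} [DecidableEq α] {g f : α → β} {a b : α}
    (ha : g a = f b) (hb : g b = f a) (hne : ∀ y, y ≠ a → y ≠ b → g y = f y) :
    g = f ∘ Equiv.swap a b := by
  funext y
  rw [Function.comp_apply, Equiv.swap_apply_def]
  split_ifs with hya hyb
  · exact hya ▸ ha
  · exact hyb ▸ hb
  · exact hne y hya hyb

open TASEP in
/-- Local update rule of the TASEP ranking process. `η : ℤ ≃ ℤ` is a multi-type TASEP
configuration, `R x = |{i ≤ x : η i ≤ η x}|` the rank, `η'` the configuration after the swap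
at bond `(a, a+1)`, and `R'` its rank function. -/
theorem tasep_ranking_update (η : ℤ ≃ ℤ) (a : ℤ)
    (hfin : ∀ x : ℤ, {i : ℤ | i ≤ x ∧ η i ≤ η x}.Finite)
    (η' : ℤ → ℤ)
    (hη' : η' a = η (a + 1) ∧ η' (a + 1) = η a ∧ ∀ y : ℤ, y ≠ a → y ≠ a + 1 → η' y = η y)
    (R R' : ℤ → ℕ)
    (hR : ∀ x : ℤ, R x = {i : ℤ | i ≤ x ∧ η i ≤ η x}.ncard)
    (hR' : ∀ x : ℤ, R' x = {i : ℤ | i ≤ x ∧ η' i ≤ η' x}.ncard) :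
    (η (a + 1) < η a →
      R (a + 1) ≤ R a ∧ R' a = R (a + 1) ∧ R' (a + 1) = R a + 1 ∧
        ∀ y : ℤ, y ≠ a → y ≠ a + 1 → R' y = R y) ∧
    (η a < η (a + 1) → R a < R (a + 1)) := by
  obtain ⟨ha, ha1, hne⟩ := hη'
  have hswap : η' = η ∘ Equiv.swap a (a + 1) := Function.eq_comp_swap_of_apply ha ha1 hne
  subst hswap
  have hfin : ∀ x, (rankSet η x (η x)).Finite := hfin
  have hR : ∀ x, R x = (rankSet η x (η x)).ncard := hR
  have hR' : ∀ x,
      R' x = (rankSet (η ∘ Equiv.swap a (a + 1)) x (η (Equiv.swap a (a + 1) x))).ncard := hR'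
  refine ⟨fun hlt => ⟨?_, ?_, ?_, fun y hya hya1 => ?_⟩, fun hlt => ?_⟩
  · rw [hR, hR]
    exact ncard_rankSet_succ_le (hfin a) hlt
  · rw [hR', hR, Equiv.swap_apply_left]
    exact ncard_rankSet_comp_swap_left hlt
  · rw [hR', hR, Equiv.swap_apply_right]
    exact ncard_rankSet_comp_swap_right (hfin a) hlt.le
  · rw [hR', hR, Equiv.swap_apply_of_ne_of_ne hya hya1, ncard_rankSet_comp_swap hya]
  · rw [hR, hR]
    exact ncard_rankSet_lt_succ (hfin (a + 1)) hlt.le
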